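/- arXiv:1205.4317 — 4 statements merged into one kernel-verified Lean document; each statement's English description precedes it below -/
import Mathlib

section
/- For every n ≥ 1, the first Cantor–Bendixson derivative of R * A_n equals R * A_{n−1}: (R * A_n)^{(1)} = R * A_{n−1}. Consequently (R * A_n)^{(n)} = {0} (the zero function). -/
/-!
Nonzero points of `R` are isolated, so near `f` every `R`-valued function agrees with `f` on any
given finite part of `supp f`. Hence if `f` is a limit of points `g ≠ f` of `R * 𝒜_{m+1}`, such a
`g` is nonzero on all of `supp f` and at some further coordinate, so `|supp f| ≤ m`. Conversely a
function with support of size `≤ m` is the limit of its perturbations at a fresh coordinate by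
nonzero points of `R` tending to `0`. Iterating, the `n`-th derivative of `R * 𝒜_n` is
`R * 𝒜_0 = {0}`.
-/

open Filter Topology Function

/-- The derived set (set of accumulation points) of `A`. -/
def derivSet {α : Type*} [TopologicalSpace α] (A : Set α) : Set α :=
  {x | AccPt x (𝓟 A)}

/-- `R * 𝒜_n`: functions with values in `R` and support of cardinality at most `n`,
as a subset of `R^ℕ` (here realized inside `ℕ → ℝ` with the product topology). -/
def RA (R : Set ℝ) (n : ℕ) : Set (ℕ → ℝ) :=
  {f | (∀ i, f i ∈ R) ∧ ∃ F : Finset ℕ, F.card ≤ n ∧ ∀ i, f i ≠ 0 → i ∈ F}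

theorem AccPt.exists_ne_eqOn_of_isolated {ι X : Type*} [TopologicalSpace X] {R : Set X}
    {A : Set (ι → X)} (hA : A ⊆ Set.univ.pi fun _ => R) {f : ι → X} (hf : AccPt f (𝓟 A))
    {T : Set ι} (hT : T.Finite) (hiso : ∀ i ∈ T, ¬AccPt (f i) (𝓟 R)) :
    ∃ g ∈ A, g ≠ f ∧ Set.EqOn g f T := by
  have hev : ∀ᶠ g in 𝓝 f, ∀ i ∈ T, g i ∈ R → g i = f i := by
    refine hT.eventually_all.2 fun i hi => ?_
    have := hiso i hi
    rw [accPt_iff_frequently, not_frequently] at this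
    exact (continuous_apply i).tendsto f |>.eventually
      (p := fun y => y ∈ R → y = f i) (this.mono fun y hy hyR => not_not.1 fun hne => hy ⟨hne, hyR⟩)
  obtain ⟨g, ⟨hne, hgA⟩, hg⟩ := ((accPt_iff_frequently.1 hf).and_eventually hev).exists
  exact ⟨g, hgA, hne, fun i hi => hg i hi (hA hgA i trivial)⟩

section RA

variable {R : Set ℝ}

theorem mem_RA_iff {n : ℕ} {f : ℕ → ℝ} :
    f ∈ RA R n ↔ (∀ i, f i ∈ R) ∧ (support f).encard ≤ n := by
  refine and_congr_right fun _ => ⟨fun ⟨F, hF, hsupp⟩ => ?_, fun h => ?_⟩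
  · calc (support f).encard ≤ (F : Set ℕ).encard := Set.encard_le_encard fun i hi => hsupp i hi
      _ = F.card := Set.encard_coe_eq_coe_finsetCard F
      _ ≤ n := by exact_mod_cast hF
  · have hfin := Set.finite_of_encard_le_coe h
    refine ⟨hfin.toFinset, ?_, fun i hi => hfin.mem_toFinset.2 hi⟩
    rwa [← Nat.cast_le (α := ℕ∞), ← Set.encard_coe_eq_coe_finsetCard, hfin.coe_toFinset]

theorem RA_zero (h0 : (0 : ℝ) ∈ R) : RA R 0 = {0} := by
  ext f
  simp only [mem_RA_iff, Nat.cast_zero, nonpos_iff_eq_zero, Set.encard_eq_zero,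
    support_eq_empty_iff, Set.mem_singleton_iff]
  exact ⟨And.right, fun hf => ⟨fun _ => hf ▸ h0, hf⟩⟩

theorem RA_subset_derivSet_RA_succ (hacc : AccPt 0 (𝓟 R)) (m : ℕ) :
    RA R m ⊆ derivSet (RA R (m + 1)) := by
  intro f hf
  obtain ⟨hval, hsupp⟩ := mem_RA_iff.1 hf
  obtain ⟨i, hi⟩ := (Set.finite_of_encard_le_coe hsupp).exists_notMem
  have hfi : f i = 0 := notMem_support.1 hi
  have hφ : Tendsto (fun y => update f i y) (𝓝 0) (𝓝 f) := by
    simpa [← hfi] using ((continuous_const (y := f)).update i continuous_id).tendsto (0 : ℝ)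
  refine accPt_iff_frequently.2 <| hφ.frequently <| (accPt_iff_frequently.1 hacc).mono ?_
  rintro y ⟨hy0, hyR⟩
  refine ⟨fun h => hy0 (by simpa [hfi] using congr_fun h i), mem_RA_iff.2 ⟨?_, ?_⟩⟩
  · intro j
    rcases eq_or_ne j i with rfl | hj
    · simpa using hyR
    · simpa [hj] using hval j
  · have hsub : support (update f i y) ⊆ insert i (support f) := by
      intro j hj
      rcases eq_or_ne j i with rfl | hji
      · exact Set.mem_insert _ _
      · exact Set.mem_insert_of_mem _ (by simpa [hji] using hj)
    calc (support (update f i y)).encard ≤ (insert i (support f)).encard :=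
          Set.encard_le_encard hsub
      _ ≤ (support f).encard + 1 := Set.encard_insert_le _ _
      _ ≤ ↑(m + 1) := by push_cast; gcongr

theorem derivSet_RA_succ_subset (hR : IsClosed R) (hiso : ∀ x ≠ 0, ¬AccPt x (𝓟 R)) (m : ℕ) :
    derivSet (RA R (m + 1)) ⊆ RA R m := by
  intro f hf
  have hRA : RA R (m + 1) ⊆ Set.univ.pi fun _ => R := fun g hg i _ => (mem_RA_iff.1 hg).1 i
  have hval : ∀ i, f i ∈ R := fun i =>
    (isClosed_set_pi fun _ _ => hR).closure_subset_iff.2 hRA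
      (mem_closure_iff_clusterPt.2 (AccPt.clusterPt hf)) i trivial
  have happrox : ∀ T ⊆ support f, T.Finite →
      ∃ g ∈ RA R (m + 1), g ≠ f ∧ T ⊆ support g ∧ Set.EqOn g f T := by
    intro T hTf hT
    obtain ⟨g, hg, hne, hgf⟩ :=
      AccPt.exists_ne_eqOn_of_isolated hRA hf hT fun i hi => hiso _ (hTf hi)
    exact ⟨g, hg, hne, fun i hi => by simpa [mem_support, hgf hi] using hTf hi, hgf⟩
  have hle : (support f).encard ≤ ↑(m + 1) := by
    by_contra! hlt
    obtain ⟨T, hTf, hT⟩ := Set.exists_subset_encard_eq (Order.add_one_le_of_lt hlt)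
    obtain ⟨g, hg, -, hTg, -⟩ := happrox T hTf (Set.finite_of_encard_eq_coe hT)
    have := (Set.encard_le_encard hTg).trans (mem_RA_iff.1 hg).2
    rw [hT] at this
    exact absurd this (by norm_cast; omega)
  have hfin := Set.finite_of_encard_le_coe hle
  obtain ⟨g, hg, hne, hsub, hgf⟩ := happrox _ subset_rfl hfin
  have hssub : support f ⊂ support g := by
    refine (Set.ssubset_iff_of_subset hsub).2 ?_
    obtain ⟨j, hj⟩ := Function.ne_iff.1 hne
    have hfj : f j = 0 := by_contra fun h => hj (hgf h)
    exact ⟨j, by simpa [hfj] using hj, by simpa using hfj⟩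
  refine mem_RA_iff.2 ⟨hval, ?_⟩
  have := (hfin.encard_lt_encard hssub).trans_le (mem_RA_iff.1 hg).2
  push_cast at this
  exact (ENat.lt_add_one_iff (ENat.natCast_ne_top m)).1 this

theorem derivSet_RA_succ (hR : IsClosed R) (hacc : ∀ x : ℝ, AccPt x (𝓟 R) ↔ x = 0) (m : ℕ) :
    derivSet (RA R (m + 1)) = RA R m :=
  (derivSet_RA_succ_subset hR (fun x hx h => hx ((hacc x).1 h)) m).antisymm
    (RA_subset_derivSet_RA_succ ((hacc 0).2 rfl) m)

theorem iterate_derivSet_RA (hR : IsClosed R) (hacc : ∀ x : ℝ, AccPt x (𝓟 R) ↔ x = 0) (m : ℕ) :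
    derivSet^[m] (RA R m) = RA R 0 := by
  induction m with
  | zero => rfl
  | succ m ih => rw [iterate_succ_apply, derivSet_RA_succ hR hacc, ih]

end RA

theorem derivSet_RA_general (R : Set ℝ) (hcomp : IsCompact R)
    (h0 : (0 : ℝ) ∈ R)
    (hacc : ∀ x : ℝ, AccPt x (𝓟 R) ↔ x = 0)
    (n : ℕ) (hn : 1 ≤ n) :
    derivSet (RA R n) = RA R (n - 1) ∧ derivSet^[n] (RA R n) = {fun _ => 0} := by
  obtain ⟨m, rfl⟩ := Nat.exists_eq_add_of_le' hn
  exact ⟨derivSet_RA_succ hcomp.isClosed hacc m,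
    (iterate_derivSet_RA hcomp.isClosed hacc _).trans (RA_zero h0)⟩

/-- For `n ≥ 1` the first Cantor–Bendixson derivative of `R * 𝒜_n` is `R * 𝒜_{n-1}`,
and consequently the `n`-th derivative is the singleton of the zero function. -/
theorem derivSet_RA (R : Set ℝ) (hc : R.Countable) (hcomp : IsCompact R)
    (hpos : R ⊆ Set.Ici 0) (h0 : (0 : ℝ) ∈ R)
    (hacc : ∀ x : ℝ, AccPt x (𝓟 R) ↔ x = 0)
    (n : ℕ) (hn : 1 ≤ n) :
    derivSet (RA R n) = RA R (n - 1) ∧ derivSet^[n] (RA R n) = {fun _ => 0} :=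
  derivSet_RA_general R hcomp h0 hacc n hn
end

section
/- The ω-th Cantor–Bendixson derivative of R * F equals {0}, where F = {F ⊆ ℕ : |F| ≤ min F + 2} ∪ {∅}. In particular R * F is homeomorphic to a countable compact space of Cantor–Bendixson rank ω + 1, hence embeds in the ordinal interval [1, ω^ω]. -/
open Filter Topology

def memF (F : Finset ℕ) : Prop :=
  F = ∅ ∨ (F.Nonempty ∧ F.card ≤ sInf (F : Set ℕ) + 2)

/-- `R * 𝓕`: functions with values in `R` whose support belongs to the family `𝓕`. -/
def RF (R : Set ℝ) : Set (ℕ → ℝ) :=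
  {f | (∀ i, f i ∈ R) ∧ ∃ F : Finset ℕ, memF F ∧ ∀ i, f i ≠ 0 ↔ i ∈ F}

/-!
Let `𝓕⁽ⁿ⁾ = {∅} ∪ {F : |F| + n ≤ min F + 2}`, so that `𝓕⁽⁰⁾ = 𝓕`. The `n`-th derived set of
`R * 𝓕` is `R * 𝓕⁽ⁿ⁾`. Indeed, if `supp f ∈ 𝓕⁽ⁿ⁺¹⁾`, then for every large `j` the set
`supp f ∪ {j}` lies in `𝓕⁽ⁿ⁾`, so changing the far coordinate `f j = 0` into some `r ∈ R \ {0}`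
gives points of `R * 𝓕⁽ⁿ⁾` converging to `f`. Conversely, if `F = supp f` is in `𝓕⁽ⁿ⁾` but not
in `𝓕⁽ⁿ⁺¹⁾`, then no proper superset of `F` is in `𝓕⁽ⁿ⁾`; as the nonzero points of `R` are
isolated, every `g ∈ R * 𝓕⁽ⁿ⁾` close to `f` agrees with `f` on `F`, hence has support `F` and
equals `f`. Finally a set containing `i` is not in `𝓕⁽ⁱ⁺²⁾`, so only the zero function lies in
every `R * 𝓕⁽ⁿ⁾`.
-/

lemma Nat.sInf_coe_le_sInf_coe {T F : Finset ℕ} (hT : T.Nonempty) (hTF : T ⊆ F) :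
    sInf (F : Set ℕ) ≤ sInf (T : Set ℕ) :=
  Nat.sInf_le (hTF (Nat.sInf_mem (Finset.coe_nonempty.2 hT)))

def memFDeriv (n : ℕ) (F : Finset ℕ) : Prop :=
  F = ∅ ∨ (F.Nonempty ∧ F.card + n ≤ sInf (F : Set ℕ) + 2)

def RFDeriv (R : Set ℝ) (n : ℕ) : Set (ℕ → ℝ) :=
  {f | (∀ i, f i ∈ R) ∧ ∃ F : Finset ℕ, memFDeriv n F ∧ ∀ i, f i ≠ 0 ↔ i ∈ F}

namespace memFDeriv

variable {n : ℕ} {T F : Finset ℕ}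

theorem mono (hF : memFDeriv n F) (hTF : T ⊆ F) : memFDeriv n T := by
  rcases T.eq_empty_or_nonempty with rfl | hT
  · exact Or.inl rfl
  rcases hF with rfl | ⟨-, hF⟩
  · exact absurd (Finset.subset_empty.1 hTF) hT.ne_empty
  have := Finset.card_le_card hTF
  have := Nat.sInf_coe_le_sInf_coe hT hTF
  exact Or.inr ⟨hT, by omega⟩

theorem card_add_le {i : ℕ} (hF : memFDeriv n F) (hi : i ∈ F) : F.card + n ≤ i + 2 := by
  rcases hF with rfl | ⟨-, hF⟩
  · simp at hi
  have : sInf (F : Set ℕ) ≤ i := Nat.sInf_le hi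
  omega

theorem insert {j : ℕ} (hF : memFDeriv (n + 1) F) (hjF : ∀ i ∈ F, i < j) (hnj : n ≤ j) :
    memFDeriv n (insert j F) := by
  refine Or.inr ⟨Finset.insert_nonempty j F, ?_⟩
  rw [Finset.card_insert_of_notMem fun h => (hjF j h).false]
  rcases hF with rfl | ⟨hFne, hF⟩
  · simp only [Finset.card_empty, zero_add, insert_empty_eq, Finset.coe_singleton, csInf_singleton]
    omega
  have hmin : sInf (F : Set ℕ) ≤ j := (hjF _ (Nat.sInf_mem (Finset.coe_nonempty.2 hFne))).le
  rw [Finset.coe_insert, csInf_insert (OrderBot.bddBelow _) (Finset.coe_nonempty.2 hFne),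
    min_eq_right hmin]
  omega

theorem eq_of_subset {G : Finset ℕ} (hFG : F ⊆ G) (hG : memFDeriv n G)
    (hF : ¬memFDeriv (n + 1) F) : F = G := by
  have hFne : F.Nonempty := Finset.nonempty_iff_ne_empty.2 fun h => hF (Or.inl h)
  rcases hG with rfl | ⟨-, hG⟩
  · exact Finset.subset_empty.1 hFG
  have hF' : sInf (F : Set ℕ) + 2 < F.card + (n + 1) := by
    simpa [memFDeriv, hFne.ne_empty, hFne] using hF
  have := Nat.sInf_coe_le_sInf_coe hFne hFG
  exact Finset.eq_of_subset_of_card_le hFG (by omega)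

end memFDeriv

theorem exists_memFDeriv_eq_of_forall_finset {n : ℕ} {S : Set ℕ}
    (h : ∀ T : Finset ℕ, ↑T ⊆ S → memFDeriv n T) : ∃ F : Finset ℕ, memFDeriv n F ∧ S = ↑F := by
  rcases S.eq_empty_or_nonempty with rfl | ⟨m, hm⟩
  · exact ⟨∅, Or.inl rfl, by simp⟩
  have hcard : ∀ T : Finset ℕ, ↑T ⊆ S → T.card ≤ m + 2 := fun T hT => by
    have := (h (insert m T) (by simpa [Set.insert_subset_iff] using ⟨hm, hT⟩)).card_add_le
      (Finset.mem_insert_self m T)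
    have := Finset.card_le_card (Finset.subset_insert m T)
    omega
  have hfin : S.Finite := by
    by_contra hinf
    obtain ⟨T, hTS, hTc⟩ := Set.Infinite.exists_subset_card_eq hinf (m + 3)
    have := hcard T hTS
    omega
  exact ⟨hfin.toFinset, h _ (by simp), by simp⟩

theorem isClosed_RFDeriv {R : Set ℝ} (hR : IsClosed R) (n : ℕ) : IsClosed (RFDeriv R n) := by
  refine isClosed_of_closure_subset fun f hf => ⟨fun i => ?_, ?_⟩
  · exact hR.closure_subset <|
      map_mem_closure (f := fun g : ℕ → ℝ => g i) (continuous_apply i) hf fun _ hg => hg.1 i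
  obtain ⟨F, hF, hS⟩ := exists_memFDeriv_eq_of_forall_finset (S := Function.support f)
    fun T hT => by
      have hU : ∀ᶠ g in 𝓝 f, ∀ i ∈ T, g i ≠ 0 := (eventually_all_finset T).2 fun i hi =>
        (continuous_apply i).continuousAt.eventually_ne (hT hi)
      obtain ⟨g, ⟨-, G, hG, hGs⟩, hgT⟩ :=
        ((mem_closure_iff_frequently.1 hf).and_eventually hU).exists
      exact hG.mono fun i hi => (hGs i).1 (hgT i hi)
  exact ⟨F, hF, fun i => Set.ext_iff.1 hS i⟩

theorem eventually_eqOn_of_not_accPt {ι X : Type*} [TopologicalSpace X] {R : Set X} {f : ι → X}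
    {F : Finset ι} (h : ∀ i ∈ F, ¬AccPt (f i) (𝓟 R)) :
    ∀ᶠ g in 𝓝 f, (∀ i, g i ∈ R) → Set.EqOn g f F := by
  have hcoord : ∀ i ∈ F, ∀ᶠ g in 𝓝 f, g i ∈ R → g i = f i := fun i hi => by
    have hiso := h i hi
    rw [accPt_iff_frequently, not_frequently] at hiso
    exact ((continuous_apply i).tendsto f).eventually
      (hiso.mono fun y hy hyR => by_contra fun hne => hy ⟨hne, hyR⟩)
  filter_upwards [(eventually_all_finset F).2 hcoord] with g hg hgR i hi using hg i hi (hgR i)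

theorem tendsto_update_cofinite {ι X : Type*} [DecidableEq ι] [TopologicalSpace X] (f : ι → X)
    (x : X) : Tendsto (fun j => Function.update f j x) cofinite (𝓝 f) :=
  tendsto_pi_nhds.2 fun i => tendsto_const_nhds.congr' <|
    (eventually_cofinite_ne i).mono fun _ hj => (Function.update_of_ne hj.symm x f).symm

theorem derivSet_RFDeriv_subset {R : Set ℝ} (hR : IsClosed R)
    (hacc : ∀ x, AccPt x (𝓟 R) → x = 0) (n : ℕ) :
    derivSet (RFDeriv R n) ⊆ RFDeriv R (n + 1) := by
  intro f hf
  obtain ⟨hfR, F, hF, hsupp⟩ : f ∈ RFDeriv R n :=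
    (isClosed_RFDeriv hR n).closure_subset (mem_closure_iff_clusterPt.2 hf.clusterPt)
  refine ⟨hfR, F, by_contra fun hF' => ?_, hsupp⟩
  have hiso := eventually_eqOn_of_not_accPt (R := R) (F := F) fun i hi h =>
    (hsupp i).2 hi (hacc _ h)
  obtain ⟨g, ⟨hgf, hgR, G, hG, hgsupp⟩, hgF⟩ :=
    ((accPt_iff_frequently.1 hf).and_eventually hiso).exists
  replace hgF := hgF hgR
  have hFG : F = G := memFDeriv.eq_of_subset (fun i hi => by
    rw [← hgsupp, hgF hi]; exact (hsupp i).2 hi) hG hF'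
  refine hgf (funext fun i => ?_)
  by_cases hi : i ∈ F
  · exact hgF hi
  · rw [not_not.1 (mt (hgsupp i).1 (hFG ▸ hi)), not_not.1 (mt (hsupp i).1 hi)]

theorem RFDeriv_succ_subset_derivSet {R : Set ℝ} {r : ℝ} (hr : r ∈ R) (hr0 : r ≠ 0) (n : ℕ) :
    RFDeriv R (n + 1) ⊆ derivSet (RFDeriv R n) := by
  rintro f ⟨hfR, F, hF, hsupp⟩
  have hfar : ∀ᶠ j in cofinite, n ≤ j ∧ ∀ i ∈ F, i < j := by
    rw [Nat.cofinite_eq_atTop]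
    filter_upwards [eventually_ge_atTop n, eventually_gt_atTop (F.sup id)] with j hnj hj
    exact ⟨hnj, fun i hi => (Finset.le_sup (f := id) hi).trans_lt hj⟩
  refine accPt_iff_frequently.2 <| (tendsto_update_cofinite f r).frequently <|
    Eventually.frequently ?_
  filter_upwards [hfar] with j ⟨hnj, hjF⟩
  have hfj : f j = 0 := by_contra fun h => (hjF j ((hsupp j).1 h)).false
  refine ⟨fun h => hr0 (by simpa [hfj] using congrFun h j), fun i => ?_, insert j F,
    hF.insert hjF hnj, fun i => ?_⟩
  · rcases eq_or_ne i j with rfl | hij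
    · simpa using hr
    · simpa [hij] using hfR i
  · rcases eq_or_ne i j with rfl | hij
    · simpa using hr0
    · simpa [hij] using hsupp i

theorem derivSet_RFDeriv {R : Set ℝ} (hR : IsClosed R) (hacc : ∀ x, AccPt x (𝓟 R) → x = 0)
    {r : ℝ} (hr : r ∈ R) (hr0 : r ≠ 0) (n : ℕ) : derivSet (RFDeriv R n) = RFDeriv R (n + 1) :=
  (derivSet_RFDeriv_subset hR hacc n).antisymm (RFDeriv_succ_subset_derivSet hr hr0 n)

theorem iInter_RFDeriv {R : Set ℝ} (h0 : (0 : ℝ) ∈ R) : ⋂ n, RFDeriv R n = {fun _ => 0} := by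
  refine Set.Subset.antisymm (fun f hf => funext fun i => by_contra fun hi => ?_) ?_
  · obtain ⟨-, F, hF, hsupp⟩ := Set.mem_iInter.1 hf (i + 2)
    have := hF.card_add_le ((hsupp i).1 hi)
    have := Finset.card_pos.2 ⟨i, (hsupp i).1 hi⟩
    omega
  · rintro _ rfl
    exact Set.mem_iInter.2 fun n => ⟨fun _ => h0, ∅, Or.inl rfl, by simp⟩

theorem derivSet_omega_RF_general (R : Set ℝ) (hcomp : IsCompact R)
    (h0 : (0 : ℝ) ∈ R) (hne : R ≠ {0})
    (hacc : ∀ x : ℝ, AccPt x (𝓟 R) ↔ x = 0) :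
    ⋂ n : ℕ, derivSet^[n] (RF R) = {fun _ => 0} := by
  obtain ⟨r, hr, hr0⟩ : ∃ r ∈ R, r ≠ 0 := by
    by_contra! h
    exact hne (Set.eq_singleton_iff_unique_mem.2 ⟨h0, h⟩)
  have hiter : ∀ n, derivSet^[n] (RF R) = RFDeriv R n := by
    intro n
    induction n with
    | zero => rfl
    | succ n ih =>
      rw [Function.iterate_succ_apply', ih,
        derivSet_RFDeriv hcomp.isClosed (fun x => (hacc x).1) hr hr0]
  simp_rw [hiter]
  exact iInter_RFDeriv h0

/-- The ω-th Cantor–Bendixson derivative of `R * 𝓕` is the singleton of the zero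
function. -/
theorem derivSet_omega_RF (R : Set ℝ) (hc : R.Countable) (hcomp : IsCompact R)
    (hpos : R ⊆ Set.Ici 0) (h0 : (0 : ℝ) ∈ R) (hne : R ≠ {0})
    (hacc : ∀ x : ℝ, AccPt x (𝓟 R) ↔ x = 0) :
    ⋂ n : ℕ, derivSet^[n] (RF R) = {fun _ => 0} :=
  derivSet_omega_RF_general R hcomp h0 hne hacc
end

section
/- If L is a closed subset of R * F not containing the zero function, then there exists n such that every f ∈ L has |supp f| ≤ n. -/
open Filter

/-- A closed subset of `R * 𝓕` avoiding the zero function has uniformly bounded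
supports. -/
theorem closed_subset_bounded_support (R : Set ℝ) (hc : R.Countable)
    (hcomp : IsCompact R) (hpos : R ⊆ Set.Ici 0) (h0 : (0 : ℝ) ∈ R)
    (hacc : ∀ x : ℝ, AccPt x (𝓟 R) ↔ x = 0)
    (L : Set (ℕ → ℝ)) (hL : L ⊆ RF R) (hLc : IsClosed L)
    (h0L : (fun _ => (0 : ℝ)) ∉ L) :
    ∃ n : ℕ, ∀ f ∈ L, ∃ F : Finset ℕ, F.card ≤ n ∧ ∀ i, f i ≠ 0 → i ∈ F := by
  have hopen : IsOpen Lᶜ := hLc.isOpen_compl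
  rw [isOpen_pi_iff] at hopen
  obtain ⟨I, u, hu, hsub⟩ := hopen _ h0L
  refine ⟨I.sup id + 2, fun f hf => ?_⟩
  obtain ⟨hfR, F, hmemF, hF⟩ := hL hf
  refine ⟨F, ?_, fun i hi => (hF i).1 hi⟩
  have hnot : ¬ ∀ i ∈ I, f i ∈ u i := by
    intro h
    exact (hsub fun i hi => h i hi) hf
  push_neg at hnot
  obtain ⟨i, hiI, hiu⟩ := hnot
  have hne : f i ≠ 0 := fun h => hiu (h ▸ (hu i hiI).2)
  have hiF : i ∈ F := (hF i).1 hne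
  rcases hmemF with h | ⟨_, hcard⟩
  · simp [h] at hiF
  · calc F.card ≤ sInf (F : Set ℕ) + 2 := hcard
      _ ≤ i + 2 := by gcongr; exact Nat.sInf_le hiF
      _ ≤ I.sup id + 2 := by gcongr; exact Finset.le_sup (f := id) hiI
end

section
/- Suppose each functional d* in a set D ⊆ c_00 (finitely supported sequences) satisfies: d* = e_i* for some i, or admits a decomposition d* = d_1* + b·(d_2* restricted to an interval) + e_i* with d_1*, d_2* ∈ D of strictly smaller 'rank', |coefficients| ≤ 1, and 0 < b ≤ 1/4. If ‖d_1* restricted to any initial interval‖_∞-induced-norm ≤ 2 and ‖d_2* restricted to any interval‖ ≤ 4 inductively, then ‖d* restricted to any initial interval I of ℕ‖ ≤ 2 (as a functional on the space normed by sup over D). -/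
open Classical in
/-- The pairing `⟨d, x⟩ = Σᵢ dᵢ xᵢ` of finitely supported sequences. -/
noncomputable def pairF (d x : ℕ →₀ ℝ) : ℝ := ∑ i ∈ d.support, d i * x i

open Classical in
/-- The restriction of `d` to the interval `(k, l]`. -/
noncomputable def restrictI (d : ℕ →₀ ℝ) (k l : ℕ) : ℕ →₀ ℝ :=
  d.filter (fun i => k < i ∧ i ≤ l)

/-!
Strong induction on the rank. Cut `d = ρ₁ d₁ + b (d₂|(k,l]) + e_i*` at `m`. If `m ≤ k` only
`ρ₁ d₁|[0,m]` survives, of norm at most `2`. If `i ≤ m` nothing is cut and `|d(x)| ≤ 1`.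
Otherwise `d₁` survives whole, contributing at most `1`, and the middle term is a difference of
two initial restrictions of `d₂`, contributing at most `b · (2 + 2) ≤ 1`.
-/

open Finsupp

section Pairing

variable (x : ℕ →₀ ℝ)

lemma pairF_eq_linearCombination (d : ℕ →₀ ℝ) : pairF d x = linearCombination ℝ (⇑x) d := by
  simp [pairF, linearCombination_apply, Finsupp.sum]

@[simp] lemma pairF_zero : pairF 0 x = 0 := by
  simp [pairF_eq_linearCombination]

@[simp] lemma pairF_add (d e : ℕ →₀ ℝ) : pairF (d + e) x = pairF d x + pairF e x := by
  simp [pairF_eq_linearCombination]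

@[simp] lemma pairF_sub (d e : ℕ →₀ ℝ) : pairF (d - e) x = pairF d x - pairF e x := by
  simp [pairF_eq_linearCombination]

@[simp] lemma pairF_smul (c : ℝ) (d : ℕ →₀ ℝ) : pairF (c • d) x = c * pairF d x := by
  simp [pairF_eq_linearCombination]

@[simp] lemma pairF_single (i : ℕ) (c : ℝ) : pairF (single i c) x = c * x i := by
  simp [pairF_eq_linearCombination]

lemma sum_filter_eq_pairF_filter (d : ℕ →₀ ℝ) (p : ℕ → Prop) [DecidablePred p] :
    ∑ i ∈ d.support.filter p, d i * x i = pairF (d.filter p) x :=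
  Finset.sum_congr rfl fun _ hi => by rw [filter_apply_pos _ _ (Finset.mem_filter.1 hi).2]

lemma abs_pairF_filter_single_le (i : ℕ) (p : ℕ → Prop) [DecidablePred p] :
    |pairF ((single i 1).filter p) x| ≤ |x i| := by
  by_cases hp : p i <;> simp [hp]

end Pairing

lemma restrictI_filter_le_eq_sub (d : ℕ →₀ ℝ) (k l m : ℕ) :
    (restrictI d k l).filter (· ≤ m) = d.filter (· ≤ max k (min l m)) - d.filter (· ≤ k) := by
  ext j
  simp only [restrictI, filter_apply, coe_sub, Pi.sub_apply]
  split_ifs <;> first | omega | ring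

lemma restrictI_filter_le_of_le (d : ℕ →₀ ℝ) {k m : ℕ} (l : ℕ) (h : m ≤ k) :
    (restrictI d k l).filter (· ≤ m) = 0 := by
  rw [restrictI_filter_le_eq_sub, max_eq_left (by omega), sub_self]

lemma abs_pairF_restrictI_filter_le {x e : ℕ →₀ ℝ} {C : ℝ}
    (he : ∀ m, |pairF (e.filter (· ≤ m)) x| ≤ C) (k l m : ℕ) :
    |pairF ((restrictI e k l).filter (· ≤ m)) x| ≤ 2 * C := by
  rw [restrictI_filter_le_eq_sub, pairF_sub]
  linarith [abs_sub (pairF (e.filter (· ≤ max k (min l m))) x) (pairF (e.filter (· ≤ k)) x),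
    he (max k (min l m)), he k]

lemma abs_pairF_filter_le_two_of_split (x : ℕ →₀ ℝ) {b ρ₁ : ℝ} (hb0 : 0 < b) (hb : b ≤ 1 / 4)
    (hρ : |ρ₁| ≤ 1) {d d₁ d₂ : ℕ →₀ ℝ} {k l i : ℕ} (hsupp₁ : ∀ j ∈ d₁.support, j ≤ k)
    (hkl : k < l) (hli : l < i) (hd : d = ρ₁ • d₁ + b • restrictI d₂ k l + single i 1)
    (hdx : |pairF d x| ≤ 1) (hd₁x : |pairF d₁ x| ≤ 1)
    (ih₁ : ∀ m, |pairF (d₁.filter (· ≤ m)) x| ≤ 2) (ih₂ : ∀ m, |pairF (d₂.filter (· ≤ m)) x| ≤ 2)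
    (m : ℕ) : |pairF (d.filter (· ≤ m)) x| ≤ 2 := by
  rcases le_or_gt i m with him | hmi
  · suffices d.filter (· ≤ m) = d by rw [this]; linarith
    refine (filter_eq_self_iff _ _).2 fun j hj => ?_
    by_contra hjm
    have hd₁j : d₁ j = 0 := notMem_support_iff.1 fun h => absurd (hsupp₁ j h) (by omega)
    apply hj
    simp [hd, hd₁j, restrictI, show ¬(i = j) by omega, show ¬(j ≤ l) by omega]
  have hsplit_filter : d.filter (· ≤ m) =
      ρ₁ • d₁.filter (· ≤ m) + b • (restrictI d₂ k l).filter (· ≤ m) := by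
    rw [hd, filter_add, filter_add, filter_smul, filter_smul, filter_single_of_neg _ (by omega),
      add_zero]
  rw [hsplit_filter, pairF_add, pairF_smul, pairF_smul]
  rcases le_or_gt m k with hmk | hkm
  · rw [restrictI_filter_le_of_le _ _ hmk, pairF_zero, mul_zero, add_zero, abs_mul]
    nlinarith [abs_nonneg ρ₁, abs_nonneg (pairF (d₁.filter (· ≤ m)) x), ih₁ m]
  · have hd₁_filter : d₁.filter (· ≤ m) = d₁ :=
      (filter_eq_self_iff _ _).2 fun j hj => (hsupp₁ j (mem_support_iff.2 hj)).trans hkm.le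
    rw [hd₁_filter]
    have h₂ := abs_pairF_restrictI_filter_le ih₂ k l m
    calc |ρ₁ * pairF d₁ x + b * pairF ((restrictI d₂ k l).filter (· ≤ m)) x|
        ≤ |ρ₁ * pairF d₁ x| + |b * pairF ((restrictI d₂ k l).filter (· ≤ m)) x| :=
          abs_add_le _ _
      _ = |ρ₁| * |pairF d₁ x| + b * |pairF ((restrictI d₂ k l).filter (· ≤ m)) x| := by
          rw [abs_mul, abs_mul, abs_of_pos hb0]
      _ ≤ 1 * 1 + 1 / 4 * (2 * 2) := by gcongr
      _ = 2 := by norm_num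

/-- If every `d* ∈ D` is either a coordinate functional or splits as
`d* = ρ₁·d₁* + b·(d₂*|(k,l]) + e_i*` with `d₁*, d₂* ∈ D` of strictly smaller rank,
`|ρ₁| ≤ 1` and `0 < b ≤ 1/4`, then every restriction of a member of `D` to an
initial interval has norm at most `2` on the space normed by `sup_{e* ∈ D} |e*(x)|`. -/
theorem initial_restriction_bound (b : ℝ) (hb0 : 0 < b) (hb : b ≤ 1 / 4)
    (D : Set (ℕ →₀ ℝ)) (rank : (ℕ →₀ ℝ) → ℕ)
    (hsplit : ∀ d ∈ D, (∃ i : ℕ, d = Finsupp.single i 1) ∨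
      ∃ d₁ ∈ D, ∃ d₂ ∈ D, ∃ (ρ₁ : ℝ) (k l i : ℕ),
        rank d₁ < rank d ∧ rank d₂ < rank d ∧ |ρ₁| ≤ 1 ∧
        (∀ j ∈ d₁.support, j ≤ k) ∧ k < l ∧ l < i ∧
        d = ρ₁ • d₁ + b • restrictI d₂ k l + Finsupp.single i 1)
    (d : ℕ →₀ ℝ) (hd : d ∈ D) (m : ℕ) (x : ℕ →₀ ℝ)
    (hx : ∀ e ∈ D, |pairF e x| ≤ 1) :
    |∑ i ∈ d.support.filter (· ≤ m), d i * x i| ≤ 2 := by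
  rw [sum_filter_eq_pairF_filter]
  induction d using (measure rank).wf.induction generalizing m with
  | h d ih =>
  rcases hsplit d hd with ⟨i, rfl⟩ |
    ⟨d₁, hd₁, d₂, hd₂, ρ₁, k, l, i, hr₁, hr₂, hρ, hsupp₁, hkl, hli, hdec⟩
  · have hxi : |x i| ≤ 1 := by simpa using hx _ hd
    linarith [abs_pairF_filter_single_le x i (· ≤ m)]
  · exact abs_pairF_filter_le_two_of_split x hb0 hb hρ hsupp₁ hkl hli hdec (hx d hd) (hx d₁ hd₁)
      (ih d₁ hr₁ hd₁) (ih d₂ hr₂ hd₂) m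
end
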